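/- Let d ≥ 1 and λ > 0. The bilinear form ⟨·,·⟩_{−2} is positive definite on the space of real polynomials in d variables: ⟨f,f⟩_{−2} ≥ 0 for every polynomial f, and ⟨f,f⟩_{−2} = 0 implies f = 0. -/

import Mathlib

open MvPolynomial MeasureTheory

/-- The Laplacian `Δ = ∑ ∂²/∂xᵢ²` acting on polynomials in `d` variables. -/
noncomputable def lap {d : ℕ} (P : MvPolynomial (Fin d) ℝ) : MvPolynomial (Fin d) ℝ :=
  ∑ i, pderiv i (pderiv i P)

/-- The polynomial `‖x‖² = x₁² + ⋯ + x_d²`. -/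
noncomputable def normSq (d : ℕ) : MvPolynomial (Fin d) ℝ := ∑ i, X i ^ 2

/-- Evaluation of a polynomial at a point of Euclidean space. -/
noncomputable def evalP {d : ℕ} (f : MvPolynomial (Fin d) ℝ)
    (x : EuclideanSpace ℝ (Fin d)) : ℝ :=
  MvPolynomial.eval (fun i => x i) f

/-- The closed unit ball `B^d ⊆ ℝ^d`. -/
noncomputable def ballD (d : ℕ) : Set (EuclideanSpace ℝ (Fin d)) :=
  Metric.closedBall 0 1

/-- The surface measure `dω` on the unit sphere `S^{d−1}`. -/
noncomputable def sphereMeas (d : ℕ) :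
    Measure (Metric.sphere (0 : EuclideanSpace ℝ (Fin d)) 1) :=
  (volume : Measure (EuclideanSpace ℝ (Fin d))).toSphere

/-- The total surface area `ω_d = ∫_{S^{d−1}} dω`. -/
noncomputable def omegaD (d : ℕ) : ℝ := (sphereMeas d Set.univ).toReal

/-- The volume of the unit ball `B^d`. -/
noncomputable def volB (d : ℕ) : ℝ := (volume (ballD d)).toReal

/-- The inner product
`⟨f,g⟩_{−2} = (λ/ω_d) ∫_{B^d} Δf Δg dx + (1/ω_d) ∫_{S^{d−1}} f g dω`. -/
noncomputable def innerNeg2 (d : ℕ) (lam : ℝ) (f g : MvPolynomial (Fin d) ℝ) : ℝ :=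
  (lam / omegaD d) * ∫ x in ballD d, evalP (lap f) x * evalP (lap g) x +
    (1 / omegaD d) * ∫ y : Metric.sphere (0 : EuclideanSpace ℝ (Fin d)) 1,
      evalP f y * evalP g y ∂(sphereMeas d)

/-- The inner product
`⟨f,g⟩_Δ = a_d ∫_{B^d} Δ[(1−‖x‖²)f] Δ[(1−‖x‖²)g] dx`, `a_d = 1/(4d² vol(B^d))`. -/
noncomputable def innerDelta (d : ℕ) (f g : MvPolynomial (Fin d) ℝ) : ℝ :=
  (1 / (4 * (d : ℝ) ^ 2 * volB d)) *
    ∫ x in ballD d,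
      evalP (lap ((1 - normSq d) * f)) x * evalP (lap ((1 - normSq d) * g)) x


/-!
If `⟨f,f⟩_{−2} = 0`, the nonnegative continuous integrands vanish, so `Δf = 0` on the open ball
(hence identically) and `f = 0` on the sphere. A polynomial vanishing on the sphere is divisible
by `1 − ‖x‖²`, so `f = (1 − ‖x‖²) g` with `Δ((1 − ‖x‖²) g) = 0`. In degree `m = deg g` this reads
`Δ(‖x‖² g_m) = ‖x‖² Δg_m + (4m + 2d) g_m = 0` for the top homogeneous component `g_m`, and a
relation `‖x‖² Δp + c p = 0` with `c > 0` passes to `Δp` with a larger constant; descending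
until `Δ` kills the polynomial gives `Δp = 0`, hence `p = 0`, at every stage.
-/

namespace MvPolynomial

section HomogeneousComponent

variable {σ R : Type*} [CommSemiring R]

theorem homogeneousComponent_totalDegree_ne_zero {p : MvPolynomial σ R} (hp : p ≠ 0) :
    homogeneousComponent p.totalDegree p ≠ 0 := by
  obtain ⟨u, hu, hdeg⟩ := Finset.exists_mem_eq_sup p.support (support_nonempty.mpr hp)
    fun u => u.sum fun _ e => e
  have hdeg' : u.degree = p.totalDegree := hdeg.symm
  intro h0
  have := congrArg (coeff u) h0
  rw [coeff_homogeneousComponent, if_pos hdeg', coeff_zero] at this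
  exact mem_support_iff.mp hu this

theorem homogeneousComponent_map_of_degree_shift (F : MvPolynomial σ R →ₗ[R] MvPolynomial σ R)
    {s : ℕ} (hF : ∀ n p, p.IsHomogeneous (n + s) → (F p).IsHomogeneous n)
    (hF₀ : ∀ n p, n < s → p.IsHomogeneous n → F p = 0) (n : ℕ) (p : MvPolynomial σ R) :
    homogeneousComponent n (F p) = F (homogeneousComponent (n + s) p) := by
  induction p using MvPolynomial.induction_on' with
  | monomial u c =>
    have hu : (monomial u c).IsHomogeneous u.degree := isHomogeneous_monomial c rfl
    rw [homogeneousComponent_of_mem hu]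
    by_cases hs : u.degree < s
    · rw [hF₀ _ _ hs hu, map_zero]
      split_ifs <;> simp [hF₀ _ _ hs hu]
    · obtain ⟨k, hk⟩ : ∃ k, u.degree = k + s := ⟨u.degree - s, by omega⟩
      rw [homogeneousComponent_of_mem (hF k _ (hk ▸ hu))]
      split_ifs <;> simp_all
  | add p q hp hq => simp only [map_add, hp, hq]

end HomogeneousComponent

theorem eq_zero_of_eval_eqOn_zero {σ : Type*} [Fintype σ] {p : MvPolynomial σ ℝ}
    {U : Set (σ → ℝ)} (hU : IsOpen U) (hne : U.Nonempty) (h : ∀ x ∈ U, eval x p = 0) :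
    p = 0 := by
  obtain ⟨x₀, hx₀⟩ := hne
  have hzero := (AnalyticOnNhd.eval_mvPolynomial p).eqOn_zero_of_preconnected_of_eventuallyEq_zero
    isPreconnected_univ (Set.mem_univ x₀) (Filter.eventuallyEq_of_mem (hU.mem_nhds hx₀) h)
  exact MvPolynomial.funext fun x => by simpa using hzero (Set.mem_univ x)

end MvPolynomial

theorem eqOn_zero_of_setIntegral_eq_zero {X : Type*} [TopologicalSpace X] [MeasurableSpace X]
    {μ : Measure X} [μ.IsOpenPosMeasure] {s : Set X} {h : X → ℝ} (hc : Continuous h)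
    (h0 : 0 ≤ h) (hi : IntegrableOn h s μ) (hint : ∫ x in s, h x ∂μ = 0) :
    Set.EqOn h 0 (interior s) := by
  have hae : h =ᵐ[μ.restrict s] 0 := (integral_eq_zero_iff_of_nonneg h0 hi).mp hint
  exact μ.eqOn_open_of_ae_eq (ae_restrict_of_ae_restrict_of_subset interior_subset hae)
    isOpen_interior hc.continuousOn continuousOn_const

section Laplacian

variable {d : ℕ}

noncomputable def lapₗ (d : ℕ) : MvPolynomial (Fin d) ℝ →ₗ[ℝ] MvPolynomial (Fin d) ℝ :=
  ∑ i, (pderiv i).toLinearMap ∘ₗ (pderiv i).toLinearMap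

@[simp]
theorem lapₗ_apply (p : MvPolynomial (Fin d) ℝ) : lapₗ d p = lap p := by
  simp [lapₗ, lap]

theorem lap_add (p q : MvPolynomial (Fin d) ℝ) : lap (p + q) = lap p + lap q := by
  simp only [← lapₗ_apply, map_add]

theorem lap_sub (p q : MvPolynomial (Fin d) ℝ) : lap (p - q) = lap p - lap q := by
  simp only [← lapₗ_apply, map_sub]

theorem lap_zero : lap (0 : MvPolynomial (Fin d) ℝ) = 0 := by
  simp only [← lapₗ_apply, map_zero]

theorem lap_C_mul (c : ℝ) (p : MvPolynomial (Fin d) ℝ) : lap (C c * p) = C c * lap p := by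
  simp [lap, Finset.mul_sum]

theorem MvPolynomial.IsHomogeneous.lap {p : MvPolynomial (Fin d) ℝ} {n : ℕ}
    (hp : p.IsHomogeneous (n + 2)) : (_root_.lap p).IsHomogeneous n :=
  IsHomogeneous.sum _ _ _ fun _ _ => by simpa using hp.pderiv.pderiv

theorem lap_eq_zero_of_isHomogeneous {p : MvPolynomial (Fin d) ℝ} {n : ℕ}
    (hp : p.IsHomogeneous n) (hn : n < 2) : lap p = 0 := by
  refine Finset.sum_eq_zero fun i _ => ?_
  have h0 : (pderiv i p).IsHomogeneous 0 := by
    simpa [Nat.sub_eq_zero_of_le (by omega : n ≤ 1)] using hp.pderiv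
  rw [← totalDegree_zero_iff_isHomogeneous, totalDegree_eq_zero_iff_eq_C] at h0
  rw [h0, pderiv_C]

theorem homogeneousComponent_lap (n : ℕ) (p : MvPolynomial (Fin d) ℝ) :
    homogeneousComponent n (lap p) = lap (homogeneousComponent (n + 2) p) := by
  simpa using homogeneousComponent_map_of_degree_shift (lapₗ d)
    (fun n p hp => by simpa using hp.lap)
    (fun n p hn hp => by simpa using lap_eq_zero_of_isHomogeneous hp hn) n p

theorem isHomogeneous_normSq : (normSq d).IsHomogeneous 2 :=
  IsHomogeneous.sum _ _ _ fun i _ => isHomogeneous_X_pow i 2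

theorem homogeneousComponent_lap_normSq_mul (n : ℕ) (p : MvPolynomial (Fin d) ℝ) :
    homogeneousComponent n (lap (normSq d * p)) = lap (normSq d * homogeneousComponent n p) := by
  have hF (k : ℕ) (q : MvPolynomial (Fin d) ℝ) (hq : q.IsHomogeneous (k + 0)) :
      ((lapₗ d ∘ₗ LinearMap.mulLeft ℝ (normSq d)) q).IsHomogeneous k := by
    have hmul : (normSq d * q).IsHomogeneous (k + 2) := by
      simpa [add_comm] using isHomogeneous_normSq.mul hq
    simpa using hmul.lap
  simpa using homogeneousComponent_map_of_degree_shift _ hF (by simp) n p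

theorem pderiv_normSq (i : Fin d) : pderiv i (normSq d) = 2 * X i := by
  simp [normSq, pderiv_X, Pi.single_apply]

theorem lap_normSq_mul (p : MvPolynomial (Fin d) ℝ) :
    lap (normSq d * p) = normSq d * lap p + 4 * ∑ i, X i * pderiv i p + 2 * d * p := by
  have h2 (i : Fin d) : pderiv i (2 : MvPolynomial (Fin d) ℝ) = 0 := (pderiv i).map_natCast 2
  have hterm (i : Fin d) : pderiv i (pderiv i (normSq d * p)) =
      normSq d * pderiv i (pderiv i p) + 4 * (X i * pderiv i p) + 2 * p := by
    simp [pderiv_normSq, h2]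
    ring
  simp only [lap, hterm, Finset.sum_add_distrib, ← Finset.mul_sum, Finset.sum_const,
    Finset.card_univ, Fintype.card_fin, nsmul_eq_mul]
  ring

theorem MvPolynomial.IsHomogeneous.lap_normSq_mul {p : MvPolynomial (Fin d) ℝ} {n : ℕ}
    (hp : p.IsHomogeneous n) :
    _root_.lap (normSq d * p) = normSq d * _root_.lap p + C (4 * n + 2 * d : ℝ) * p := by
  rw [_root_.lap_normSq_mul, hp.sum_X_mul_pderiv]
  simp only [nsmul_eq_mul, map_add, map_mul, map_ofNat, map_natCast]
  ring

end Laplacian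

section Injectivity

variable {d : ℕ}

/-- Applying `Δ` to the relation and using `IsHomogeneous.lap_normSq_mul` for `Δp` gives the same
relation for `Δp`, of lower degree, with the larger constant `c + 4 (deg p - 2) + 2d`. -/
theorem eq_zero_of_normSq_mul_lap_add_C_mul_eq_zero {p : MvPolynomial (Fin d) ℝ} {n : ℕ}
    {c : ℝ} (hp : p.IsHomogeneous n) (hc : 0 < c) (h : normSq d * lap p + C c * p = 0) :
    p = 0 := by
  induction n using Nat.strong_induction_on generalizing p c with
  | _ n ih =>
  have hlap : lap p = 0 := by
    obtain hn | ⟨k, rfl⟩ : n < 2 ∨ ∃ k, n = k + 2 := by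
      rcases lt_or_ge n 2 with hn | hn
      exacts [.inl hn, .inr ⟨n - 2, by omega⟩]
    · exact lap_eq_zero_of_isHomogeneous hp hn
    · refine ih k (by omega) hp.lap (c := c + (4 * k + 2 * d)) (by positivity) ?_
      have := congrArg lap h
      rw [lap_add, lap_C_mul, hp.lap.lap_normSq_mul, lap_zero] at this
      rw [← this, map_add]
      ring
  simpa [hlap, hc.ne'] using h

theorem eq_zero_of_lap_normSq_mul_eq_zero (hd : 0 < d) {p : MvPolynomial (Fin d) ℝ} {n : ℕ}
    (hp : p.IsHomogeneous n) (h : lap (normSq d * p) = 0) : p = 0 :=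
  eq_zero_of_normSq_mul_lap_add_C_mul_eq_zero hp (by positivity) (hp.lap_normSq_mul ▸ h)

/-- In the top degree `m` of `g`, `Δg = Δ(‖x‖² g)` reads `0 = Δ(‖x‖² g_m)`, since `Δ` lowers
degrees by two. -/
theorem eq_zero_of_lap_one_sub_normSq_mul_eq_zero (hd : 0 < d) {g : MvPolynomial (Fin d) ℝ}
    (h : lap ((1 - normSq d) * g) = 0) : g = 0 := by
  by_contra hg
  set m := g.totalDegree
  have htop : lap (normSq d * homogeneousComponent m g) = 0 := by
    have := congrArg (homogeneousComponent m) h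
    rw [sub_mul, one_mul, lap_sub, map_sub, homogeneousComponent_lap,
      homogeneousComponent_eq_zero (m + 2) g (by omega), lap_zero,
      homogeneousComponent_lap_normSq_mul, map_zero] at this
    simpa using this
  exact homogeneousComponent_totalDegree_ne_zero hg
    (eq_zero_of_lap_normSq_mul_eq_zero hd (homogeneousComponent_isHomogeneous m g) htop)

end Injectivity

section Factorization

theorem finSuccEquiv_normSq (n : ℕ) :
    finSuccEquiv ℝ n (normSq (n + 1)) = Polynomial.X ^ 2 + Polynomial.C (normSq n) := by
  simp [normSq, Fin.sum_univ_succ, finSuccEquiv_X_zero, finSuccEquiv_X_succ]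

theorem eval_cons_normSq {n : ℕ} (s : ℝ) (y : Fin n → ℝ) :
    eval (Fin.cons s y) (normSq (n + 1)) = s ^ 2 + eval y (normSq n) := by
  simp [eval_eq_eval_mv_eval', finSuccEquiv_normSq]

/-- Divide by `x₀² + ‖y‖² - 1`, monic in `x₀`: the remainder `a(y) x₀ + b(y)` vanishes at
`x₀ = ±√(1 - ‖y‖²)` for every `y` in the open unit ball, so `a = b = 0`. -/
theorem one_sub_normSq_dvd_of_eval_eq_zero {n : ℕ} {f : MvPolynomial (Fin (n + 1)) ℝ}
    (hf : ∀ x, eval x (normSq (n + 1)) = 1 → eval x f = 0) : 1 - normSq (n + 1) ∣ f := by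
  set q : Polynomial (MvPolynomial (Fin n) ℝ) := Polynomial.X ^ 2 + Polynomial.C (normSq n - 1)
  have hq : q.Monic := Polynomial.monic_X_pow_add (Polynomial.degree_C_le.trans_lt (by norm_num))
  have hφq : finSuccEquiv ℝ n (normSq (n + 1) - 1) = q := by
    rw [map_sub, map_one, finSuccEquiv_normSq]
    simp only [q, map_sub, map_one]
    ring
  obtain ⟨a, b, hr⟩ :
      ∃ a b, finSuccEquiv ℝ n f %ₘ q = Polynomial.C a * Polynomial.X + Polynomial.C b := by
    refine ⟨_, _, Polynomial.eq_X_add_C_of_degree_le_one ?_⟩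
    have := Polynomial.degree_modByMonic_lt (finSuccEquiv ℝ n f) hq
    rw [Polynomial.degree_X_pow_add_C (by norm_num)] at this
    exact Order.le_of_lt_succ (by exact_mod_cast this)
  have hroot (y : Fin n → ℝ) (s : ℝ) (hs : s ^ 2 + eval y (normSq n) = 1) :
      eval y a * s + eval y b = 0 := by
    have h0 := hf (Fin.cons s y) (by rw [eval_cons_normSq, hs])
    have hq0 : s ^ 2 + (eval y (normSq n) - 1) = 0 := by linarith
    rw [eval_eq_eval_mv_eval', ← Polynomial.modByMonic_add_div (finSuccEquiv ℝ n f) q, hr] at h0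
    simpa [q, hq0] using h0
  set B := {y : Fin n → ℝ | eval y (normSq n) < 1}
  have hball (y : Fin n → ℝ) (hy : y ∈ B) : eval y a = 0 ∧ eval y b = 0 := by
    set t := Real.sqrt (1 - eval y (normSq n))
    have ht : t ^ 2 + eval y (normSq n) = 1 := by
      rw [Real.sq_sqrt (by linarith [hy.out])]
      ring
    have htpos : 0 < t := Real.sqrt_pos.mpr (by linarith [hy.out])
    have hpos := hroot y t ht
    have hneg := hroot y (-t) (by rw [neg_sq, ht])
    constructor <;> nlinarith
  have hopen : IsOpen B := isOpen_lt (MvPolynomial.continuous_eval _) continuous_const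
  have hne : B.Nonempty := ⟨0, by simp [B, normSq]⟩
  have ha := eq_zero_of_eval_eqOn_zero hopen hne fun y hy => (hball y hy).1
  have hb := eq_zero_of_eval_eqOn_zero hopen hne fun y hy => (hball y hy).2
  have hdvd : q ∣ finSuccEquiv ℝ n f := by
    rw [← Polynomial.modByMonic_eq_zero_iff_dvd hq, hr, ha, hb]
    simp
  rw [← hφq, map_dvd_iff] at hdvd
  rw [← neg_sub]
  exact neg_dvd.mpr hdvd

end Factorization

section EuclideanSpace

variable {d : ℕ}

theorem continuous_evalP (f : MvPolynomial (Fin d) ℝ) : Continuous (evalP f) :=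
  (MvPolynomial.continuous_eval f).comp (PiLp.continuous_ofLp 2 _)

theorem evalP_toLp (f : MvPolynomial (Fin d) ℝ) (x : Fin d → ℝ) :
    evalP f (WithLp.toLp 2 x) = eval x f :=
  rfl

theorem evalP_normSq (x : EuclideanSpace ℝ (Fin d)) : evalP (normSq d) x = ‖x‖ ^ 2 := by
  simp [evalP, normSq, EuclideanSpace.norm_sq_eq]

theorem eq_zero_of_evalP_eqOn_ball {f : MvPolynomial (Fin d) ℝ}
    (h : ∀ x ∈ Metric.ball (0 : EuclideanSpace ℝ (Fin d)) 1, evalP f x = 0) : f = 0 :=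
  eq_zero_of_eval_eqOn_zero (U := WithLp.toLp 2 ⁻¹' Metric.ball 0 1)
    (Metric.isOpen_ball.preimage (PiLp.continuous_toLp 2 _)) ⟨0, by simp⟩ fun x hx => h _ hx

theorem eq_zero_of_lap_eq_zero_of_evalP_sphere (hd : 0 < d) {f : MvPolynomial (Fin d) ℝ}
    (hlap : lap f = 0) (hf : ∀ x : EuclideanSpace ℝ (Fin d), ‖x‖ = 1 → evalP f x = 0) :
    f = 0 := by
  obtain ⟨n, rfl⟩ : ∃ n, d = n + 1 := ⟨d - 1, by omega⟩
  obtain ⟨g, rfl⟩ := one_sub_normSq_dvd_of_eval_eq_zero fun x hx => by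
    refine hf (WithLp.toLp 2 x) ((pow_left_inj₀ (norm_nonneg _) zero_le_one two_ne_zero).mp ?_)
    rw [← evalP_normSq, evalP_toLp, hx, one_pow]
  rw [eq_zero_of_lap_one_sub_normSq_mul_eq_zero hd hlap, mul_zero]

theorem omegaD_pos (hd : 0 < d) : 0 < omegaD d := by
  have h := Measure.toSphere_real_apply_univ (volume : Measure (EuclideanSpace ℝ (Fin d)))
  rw [finrank_euclideanSpace_fin] at h
  rw [omegaD, sphereMeas, ← measureReal_def, h]
  exact mul_pos (by exact_mod_cast hd)
    (ENNReal.toReal_pos (Metric.measure_ball_pos _ _ one_pos).ne' measure_ball_lt_top.ne)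

instance : (sphereMeas d).IsOpenPosMeasure := by
  unfold sphereMeas; infer_instance

instance : IsFiniteMeasure (sphereMeas d) := by
  unfold sphereMeas; infer_instance

theorem evalP_eq_zero_of_integral_sphere_eq_zero {f : MvPolynomial (Fin d) ℝ}
    (h : ∫ y, evalP f y * evalP f y ∂(sphereMeas d) = 0) {x : EuclideanSpace ℝ (Fin d)}
    (hx : ‖x‖ = 1) : evalP f x = 0 := by
  have hcont : Continuous fun y : Metric.sphere (0 : EuclideanSpace ℝ (Fin d)) 1 =>
      evalP f y * evalP f y :=
    ((continuous_evalP f).mul (continuous_evalP f)).comp continuous_subtype_val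
  have hsphere := eqOn_zero_of_setIntegral_eq_zero (s := Set.univ) hcont
    (fun y => mul_self_nonneg _) (hcont.continuousOn.integrableOn_compact isCompact_univ)
    (by rw [Measure.restrict_univ]; exact h)
  simpa using hsphere (x := ⟨x, mem_sphere_zero_iff_norm.mpr hx⟩) (by simp)

end EuclideanSpace

section InnerNeg2

variable {d : ℕ}

theorem innerNeg2_self_nonneg {lam : ℝ} (hlam : 0 ≤ lam) (f : MvPolynomial (Fin d) ℝ) :
    0 ≤ innerNeg2 d lam f f := by
  have hω : 0 ≤ omegaD d := ENNReal.toReal_nonneg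
  refine mul_nonneg (div_nonneg hlam hω) (setIntegral_nonneg measurableSet_closedBall fun x _ => ?_)
  exact add_nonneg (mul_self_nonneg _)
    (mul_nonneg (by positivity) (integral_nonneg fun y => mul_self_nonneg _))

/-- As `innerNeg2` parses, the sphere term is a constant inside the ball integral; the
nonnegative continuous integrand vanishes on the open ball, at the centre in particular. -/
theorem lap_eq_zero_and_evalP_sphere_of_innerNeg2_self_eq_zero (hd : 0 < d) {lam : ℝ}
    (hlam : 0 < lam) {f : MvPolynomial (Fin d) ℝ} (h : innerNeg2 d lam f f = 0) :
    lap f = 0 ∧ ∀ x : EuclideanSpace ℝ (Fin d), ‖x‖ = 1 → evalP f x = 0 := by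
  have hω := omegaD_pos hd
  set S := ∫ y, evalP f y * evalP f y ∂(sphereMeas d)
  have hK : 0 ≤ 1 / omegaD d * S :=
    mul_nonneg (by positivity) (integral_nonneg fun y => mul_self_nonneg _)
  have hint : ∫ x in ballD d, (evalP (lap f) x * evalP (lap f) x + 1 / omegaD d * S) = 0 :=
    (mul_eq_zero.mp h).resolve_left (by positivity)
  have hcont : Continuous fun x => evalP (lap f) x * evalP (lap f) x + 1 / omegaD d * S :=
    ((continuous_evalP _).mul (continuous_evalP _)).add continuous_const
  have hball := eqOn_zero_of_setIntegral_eq_zero hcont (fun x => add_nonneg (mul_self_nonneg _) hK)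
    (hcont.continuousOn.integrableOn_compact (isCompact_closedBall 0 1)) hint
  rw [interior_closedBall _ one_ne_zero] at hball
  have hsum (x) (hx : x ∈ Metric.ball (0 : EuclideanSpace ℝ (Fin d)) 1) :=
    (add_eq_zero_iff_of_nonneg (mul_self_nonneg _) hK).mp (hball hx)
  have hS : S = 0 :=
    (mul_eq_zero.mp (hsum 0 (Metric.mem_ball_self one_pos)).2).resolve_left (by positivity)
  exact ⟨eq_zero_of_evalP_eqOn_ball fun x hx => mul_self_eq_zero.mp (hsum x hx).1,
    fun x hx => evalP_eq_zero_of_integral_sphere_eq_zero hS hx⟩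

end InnerNeg2

/-- `⟨·,·⟩_{−2}` is positive definite on real polynomials. -/
theorem stmt15 (d : ℕ) (hd : 1 ≤ d) (lam : ℝ) (hlam : 0 < lam) :
    (∀ f : MvPolynomial (Fin d) ℝ, 0 ≤ innerNeg2 d lam f f) ∧
      ∀ f : MvPolynomial (Fin d) ℝ, innerNeg2 d lam f f = 0 → f = 0 := by
  refine ⟨innerNeg2_self_nonneg hlam.le, fun f h => ?_⟩
  obtain ⟨hlap, hsphere⟩ := lap_eq_zero_and_evalP_sphere_of_innerNeg2_self_eq_zero hd hlam h
  exact eq_zero_of_lap_eq_zero_of_evalP_sphere hd hlap hsphere
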